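/- arXiv:2105.09604 — 6 statements merged into one kernel-verified Lean document; each statement's English description precedes it below -/
import Mathlib

section
/- In the category Eq of equivalence relations on ℕ (morphisms: quotient maps induced by computable equivalence-preserving functions), a morphism γ : R → S is a monomorphism if and only if the underlying map on equivalence classes is injective. -/
/-- `f` is `(R,S)`-equivalence preserving. -/
def EqvPres (R S : Setoid ℕ) (f : ℕ → ℕ) : Prop :=
  ∀ x y, R.r x y → S.r (f x) (f y)

/-- `α` is a morphism of the category `Eq` from `R` to `S`: a map on quotients
induced by a computable equivalence-preserving function. -/
def IsMor (R S : Setoid ℕ) (α : Quotient R → Quotient S) : Prop :=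
  ∃ f : ℕ → ℕ, Computable f ∧ EqvPres R S f ∧
    ∀ x, α (Quotient.mk R x) = Quotient.mk S (f x)

/-- `γ` is a monomorphism in `Eq`. -/
def IsMono (R S : Setoid ℕ) (γ : Quotient R → Quotient S) : Prop :=
  ∀ (E : Setoid ℕ) (α β : Quotient E → Quotient R),
    IsMor E R α → IsMor E R β → γ ∘ α = γ ∘ β → α = β

/-! Injective maps are cancellable on the left against anything; conversely, two classes
with the same image under a monomorphism are separated by the constant morphisms onto them. -/

theorem isMor_const (E R : Setoid ℕ) (q : Quotient R) : IsMor E R (fun _ => q) :=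
  ⟨fun _ => q.out, Computable.const _, fun _ _ _ => R.refl _, fun _ => (Quotient.out_eq q).symm⟩

theorem IsMono.injective {R S : Setoid ℕ} {γ : Quotient R → Quotient S} (hγ : IsMono R S γ) :
    Function.Injective γ := fun a b hab =>
  congrFun (hγ R _ _ (isMor_const R R a) (isMor_const R R b) (funext fun _ => hab)) ⟦0⟧

theorem isMono_of_injective {R S : Setoid ℕ} {γ : Quotient R → Quotient S}
    (hγ : Function.Injective γ) : IsMono R S γ :=
  fun _ _ _ _ _ h => hγ.comp_left h

theorem stmt_2_general (R S : Setoid ℕ) (γ : Quotient R → Quotient S) :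
    IsMono R S γ ↔ Function.Injective γ :=
  ⟨IsMono.injective, isMono_of_injective⟩

/-- In `Eq`, a morphism is a monomorphism iff it is injective on equivalence classes. -/
theorem stmt_2 (R S : Setoid ℕ) (γ : Quotient R → Quotient S) (hγ : IsMor R S γ) :
    IsMono R S γ ↔ Function.Injective γ :=
  stmt_2_general R S γ
end

section
/- In the full subcategory Eq(Σ⁰₁) of c.e. equivalence relations (ceers), epimorphisms coincide with morphisms that are surjective on equivalence classes: if R, S are ceers and α : R → S is a morphism whose range omits some S-class, then there exist a ceer T and two distinct morphisms α₁, α₂ : S → T with α₁ ∘ α = α₂ ∘ α. -/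
/-- An equivalence relation is a ceer if its graph is c.e. -/
def Ceer (R : Setoid ℕ) : Prop := REPred fun p : ℕ × ℕ => R.r p.1 p.2

/-!
Let `f` induce `α`. Glue two copies of `S` (on the even and on the odd numbers) by identifying
the two copies of every class in the range of `α`. This pushout of `α` along itself is again a
ceer, the two inclusions `x ↦ 2x` and `x ↦ 2x + 1` agree after `α`, and they differ at any class
`[a]` omitted by `α`, whose two copies stay apart.
-/

namespace REPred

open Nat.Partrec.Code

variable {α β : Type*} [Primcodable α] [Primcodable β]

theorem comp {p : β → Prop} {g : α → β} (hp : REPred p) (hg : Computable g) :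
    REPred fun a => p (g a) :=
  Partrec.comp hp hg

theorem and {p q : α → Prop} (hp : REPred p) (hq : REPred q) : REPred fun a => p a ∧ q a :=
  (hp.bind (hq.comp Computable.fst).to₂).of_eq fun a =>
    Part.ext fun u => by simp [Part.mem_assert_iff, Part.mem_bind_iff]

theorem or {p q : α → Prop} (hp : REPred p) (hq : REPred q) : REPred fun a => p a ∨ q a := by
  obtain ⟨k, hk, hdom⟩ := Partrec.merge' hp hq
  exact hk.dom_re.of_eq fun a => by rw [(hdom a).2]; simp [Part.assert]

/-- Dovetail over the witness `n` and a step bound `k` for the code of `p`. -/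
theorem exists_nat {p : α × ℕ → Prop} (hp : REPred p) : REPred fun a => ∃ n, p (a, n) := by
  obtain ⟨c, hc⟩ := exists_code.1 hp
  have halts : ∀ x : α × ℕ, (eval c (Encodable.encode x)).Dom ↔ p x := fun x => by
    rw [hc]; simp [Part.assert]
  let search (a : α) (m : ℕ) : Option Unit :=
    (evaln m.unpair.1 c (Encodable.encode (a, m.unpair.2))).map fun _ => ()
  have hstep : Primrec fun x : α × ℕ =>
      evaln x.2.unpair.1 c (Encodable.encode (x.1, x.2.unpair.2)) :=
    have unpair := Primrec.unpair.comp (Primrec.snd (α := α) (β := ℕ))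
    primrec_evaln.comp <| ((Primrec.fst.comp unpair).pair (Primrec.const c)).pair
      (Primrec.encode.comp (Primrec.fst.pair (Primrec.snd.comp unpair)))
  have hsearch : Computable₂ search :=
    (Primrec.option_map hstep (Primrec.const ()).to₂).to_comp
  refine (Partrec.rfindOpt hsearch).dom_re.of_eq fun a => ?_
  simp only [Nat.rfindOpt_dom, search, Option.mem_def, Option.map_eq_some_iff]
  constructor
  · rintro ⟨m, -, v, hv, -⟩
    exact ⟨m.unpair.2, (halts _).1 (Part.dom_iff_mem.2 ⟨v, evaln_sound hv⟩)⟩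
  · rintro ⟨n, hn⟩
    obtain ⟨v, hv⟩ := Part.dom_iff_mem.1 ((halts _).2 hn)
    obtain ⟨k, hk⟩ := evaln_complete.1 hv
    exact ⟨Nat.pair k n, (), v, by simpa using hk, trivial⟩

end REPred

namespace EqvPres

variable {R S : Setoid ℕ} {f : ℕ → ℕ}

def quotientMap (hf : EqvPres R S f) : Quotient R → Quotient S :=
  Quotient.map f fun x y => hf x y

theorem isMor_quotientMap (hc : Computable f) (hf : EqvPres R S f) :
    IsMor R S hf.quotientMap :=
  ⟨f, hc, hf, fun _ => rfl⟩

end EqvPres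

def glue (S : Setoid ℕ) (f : ℕ → ℕ) : Setoid ℕ where
  r u v := S.r (u / 2) (v / 2) ∧ (u % 2 = v % 2 ∨ ∃ n, S.r (u / 2) (f n))
  iseqv :=
    { refl := fun _ => ⟨S.refl' _, Or.inl rfl⟩
      symm := fun ⟨h, hp⟩ =>
        ⟨S.symm' h, hp.imp Eq.symm fun ⟨n, hn⟩ => ⟨n, S.trans' (S.symm' h) hn⟩⟩
      trans := fun ⟨h, hp⟩ ⟨h', hp'⟩ =>
        ⟨S.trans' h h', match hp, hp' with
          | Or.inl e, Or.inl e' => Or.inl (e.trans e')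
          | Or.inr hn, _ => Or.inr hn
          | Or.inl _, Or.inr ⟨n, hn⟩ => Or.inr ⟨n, S.trans' h hn⟩⟩ }

namespace glue

variable {S : Setoid ℕ} {f : ℕ → ℕ}

theorem r_iff {u v : ℕ} :
    (glue S f).r u v ↔ S.r (u / 2) (v / 2) ∧ (u % 2 = v % 2 ∨ ∃ n, S.r (u / 2) (f n)) :=
  Iff.rfl

theorem ceer (hS : Ceer S) (hf : Computable f) : Ceer (glue S f) := by
  have half₁ : Computable fun p : ℕ × ℕ => p.1 / 2 :=
    (Primrec.nat_div.comp Primrec.fst (Primrec.const 2)).to_comp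
  have half₂ : Computable fun p : ℕ × ℕ => p.2 / 2 :=
    (Primrec.nat_div.comp Primrec.snd (Primrec.const 2)).to_comp
  have parity : ComputablePred fun p : ℕ × ℕ => p.1 % 2 = p.2 % 2 :=
    (Primrec.eq.comp (Primrec.nat_mod.comp Primrec.fst (Primrec.const 2))
      (Primrec.nat_mod.comp Primrec.snd (Primrec.const 2))).computablePred
  have inRange : REPred fun x : (ℕ × ℕ) × ℕ => S.r (x.1.1 / 2) (f x.2) :=
    hS.comp ((half₁.comp Computable.fst).pair (hf.comp Computable.snd))
  exact (hS.comp (half₁.pair half₂)).and (parity.to_re.or inRange.exists_nat)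

theorem eqvPres_even : EqvPres S (glue S f) (2 * ·) :=
  fun x y h => by simpa [r_iff] using h

theorem eqvPres_odd : EqvPres S (glue S f) (2 * · + 1) :=
  fun x y h => by simpa [r_iff, Nat.mul_add_div] using h

theorem r_even_odd_iff {x y : ℕ} :
    (glue S f).r (2 * x) (2 * y + 1) ↔ S.r x y ∧ ∃ n, S.r x (f n) := by
  simp [r_iff, Nat.mul_add_div]

end glue

theorem stmt_6_general (R S : Setoid ℕ) (hS : Ceer S)
    (α : Quotient R → Quotient S) (hα : IsMor R S α)
    (hnot : ∃ a : ℕ, Quotient.mk S a ∉ Set.range α) :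
    ∃ (T : Setoid ℕ), Ceer T ∧
      ∃ (α₁ α₂ : Quotient S → Quotient T),
        IsMor S T α₁ ∧ IsMor S T α₂ ∧ α₁ ≠ α₂ ∧ α₁ ∘ α = α₂ ∘ α := by
  obtain ⟨f, hf, -, hα⟩ := hα
  obtain ⟨a, ha⟩ := hnot
  refine ⟨glue S f, glue.ceer hS hf, _, _,
    glue.eqvPres_even.isMor_quotientMap (Primrec.nat_mul.comp (Primrec.const 2) Primrec.id).to_comp,
    glue.eqvPres_odd.isMor_quotientMap
      (Primrec.succ.comp (Primrec.nat_mul.comp (Primrec.const 2) Primrec.id)).to_comp, ?_, ?_⟩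
  · intro h
    obtain ⟨-, n, hn⟩ := glue.r_even_odd_iff.1 (Quotient.exact (congrFun h ⟦a⟧))
    exact ha ⟨⟦n⟧, (hα n).trans (Quotient.sound (S.symm' hn))⟩
  · funext q
    induction q using Quotient.ind with
    | _ x =>
      simp only [Function.comp_apply, hα, EqvPres.quotientMap, Quotient.map_mk]
      exact Quotient.sound (glue.r_even_odd_iff.2 ⟨S.refl' _, x, S.refl' _⟩)

/-- In `Eq(Σ⁰₁)` epimorphisms are exactly the surjective morphisms: a morphism of ceers
that omits some class from its range is not epi, as witnessed inside the ceers. -/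
theorem stmt_6 (R S : Setoid ℕ) (hR : Ceer R) (hS : Ceer S)
    (α : Quotient R → Quotient S) (hα : IsMor R S α)
    (hnot : ∃ a : ℕ, Quotient.mk S a ∉ Set.range α) :
    ∃ (T : Setoid ℕ), Ceer T ∧
      ∃ (α₁ α₂ : Quotient S → Quotient T),
        IsMor S T α₁ ∧ IsMor S T α₂ ∧ α₁ ≠ α₂ ∧ α₁ ∘ α = α₂ ∘ α :=
  stmt_6_general R S hS α hα hnot
end

section
/- The category Eq has coequalizers: given morphisms α, β : X → Y induced by computable functions f₁, f₂, let Z be the equivalence relation generated by Y ∪ {(f₁(x), f₂(x)) : x ∈ ℕ}. Then the morphism γ : Y → Z induced by the identity function on ℕ is a coequalizer of α and β. -/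
/-- The equivalence relation generated by a binary relation on ℕ. -/
def genSetoid (r : ℕ → ℕ → Prop) : Setoid ℕ :=
  ⟨Relation.EqvGen r, Relation.EqvGen.is_equivalence r⟩

/-- The relation generating the coequalizer: `Y` together with the pairs `(f₁ x, f₂ x)`. -/
def coeqRel (Y : Setoid ℕ) (f₁ f₂ : ℕ → ℕ) : ℕ → ℕ → Prop :=
  fun u v => Y.r u v ∨ ∃ x, u = f₁ x ∧ v = f₂ x

/-! The relation `Z` is the finest equivalence relation containing `Y` and identifying `f₁ x`
with `f₂ x`. A morphism `γ'` out of `Y` coequalizing `α` and `β` is induced by a computable `g`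
that respects `Y` and relates `g (f₁ x)` to `g (f₂ x)`; hence `g` respects `Z` and induces the
factorization through `γ`, which is unique because `γ` is surjective. -/

lemma eqvPres_genSetoid {r : ℕ → ℕ → Prop} {S : Setoid ℕ} {g : ℕ → ℕ}
    (h : ∀ u v, r u v → S.r (g u) (g v)) : EqvPres (genSetoid r) S g := by
  intro x y hxy
  induction hxy with
  | rel u v huv => exact h u v huv
  | refl u => exact S.refl _
  | symm u v _ ih => exact S.symm ih
  | trans u v w _ _ ih₁ ih₂ => exact S.trans ih₁ ih₂

lemma eqvPres_genSetoid_coeqRel {Y S : Setoid ℕ} {f₁ f₂ g : ℕ → ℕ} (hg : EqvPres Y S g)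
    (hfg : ∀ x, S.r (g (f₁ x)) (g (f₂ x))) : EqvPres (genSetoid (coeqRel Y f₁ f₂)) S g :=
  eqvPres_genSetoid fun u v => by
    rintro (h | ⟨x, rfl, rfl⟩)
    exacts [hg u v h, hfg x]

lemma eqvPres_id_genSetoid_coeqRel (Y : Setoid ℕ) (f₁ f₂ : ℕ → ℕ) :
    EqvPres Y (genSetoid (coeqRel Y f₁ f₂)) id :=
  fun u v h => Relation.EqvGen.rel u v (Or.inl h)

lemma genSetoid_coeqRel_rel (Y : Setoid ℕ) (f₁ f₂ : ℕ → ℕ) (x : ℕ) :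
    (genSetoid (coeqRel Y f₁ f₂)).r (f₁ x) (f₂ x) :=
  Relation.EqvGen.rel _ _ (Or.inr ⟨x, rfl, rfl⟩)

lemma isMor_quotientMap {R S : Setoid ℕ} {f : ℕ → ℕ} (hf : Computable f)
    (hp : EqvPres R S f) :
    IsMor R S (Quotient.map f fun a b => hp a b) :=
  ⟨f, hf, hp, fun _ => rfl⟩

lemma comp_eq_comp_iff_forall_rel {X Y U : Setoid ℕ} {f₁ f₂ g : ℕ → ℕ}
    {α β : Quotient X → Quotient Y} {γ : Quotient Y → Quotient U}
    (hα : ∀ x, α (Quotient.mk X x) = Quotient.mk Y (f₁ x))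
    (hβ : ∀ x, β (Quotient.mk X x) = Quotient.mk Y (f₂ x))
    (hγ : ∀ y, γ (Quotient.mk Y y) = Quotient.mk U (g y)) :
    γ ∘ α = γ ∘ β ↔ ∀ x, U.r (g (f₁ x)) (g (f₂ x)) := by
  constructor
  · intro h x
    apply Quotient.exact
    simpa only [Function.comp_apply, hα, hβ, hγ] using congrFun h (Quotient.mk X x)
  · intro h
    funext q
    induction q using Quotient.ind with
    | _ x =>
      simp only [Function.comp_apply, hα, hβ, hγ]
      exact Quotient.sound (h x)

theorem stmt_11_general (X Y : Setoid ℕ) (f₁ f₂ : ℕ → ℕ)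
    (α β : Quotient X → Quotient Y)
    (hα : ∀ x, α (Quotient.mk X x) = Quotient.mk Y (f₁ x))
    (hβ : ∀ x, β (Quotient.mk X x) = Quotient.mk Y (f₂ x))
    (γ : Quotient Y → Quotient (genSetoid (coeqRel Y f₁ f₂)))
    (hγ : ∀ y, γ (Quotient.mk Y y) = Quotient.mk (genSetoid (coeqRel Y f₁ f₂)) y) :
    IsMor Y (genSetoid (coeqRel Y f₁ f₂)) γ ∧ γ ∘ α = γ ∘ β ∧
    ∀ (U : Setoid ℕ) (γ' : Quotient Y → Quotient U),
      IsMor Y U γ' → γ' ∘ α = γ' ∘ β →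
      ∃! δ : Quotient (genSetoid (coeqRel Y f₁ f₂)) → Quotient U,
        IsMor (genSetoid (coeqRel Y f₁ f₂)) U δ ∧ δ ∘ γ = γ' := by
  have hγ_surj : Function.Surjective γ := Quotient.ind fun y => ⟨_, hγ y⟩
  refine ⟨⟨id, Computable.id, eqvPres_id_genSetoid_coeqRel Y f₁ f₂, hγ⟩,
    (comp_eq_comp_iff_forall_rel hα hβ hγ).2 (genSetoid_coeqRel_rel Y f₁ f₂), ?_⟩
  rintro U γ' ⟨g, hg_comp, hg_pres, hg⟩ hγ'
  have hgZ := eqvPres_genSetoid_coeqRel hg_pres ((comp_eq_comp_iff_forall_rel hα hβ hg).1 hγ')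
  have hfactor : Quotient.map g (fun a b => hgZ a b) ∘ γ = γ' := by
    funext q
    induction q using Quotient.ind with
    | _ y => rw [Function.comp_apply, hγ, hg, Quotient.map_mk]
  exact ⟨_, ⟨isMor_quotientMap hg_comp hgZ, hfactor⟩,
    fun δ hδ => hγ_surj.injective_comp_right (hδ.2.trans hfactor.symm)⟩

/-- `Eq` has coequalizers: for morphisms `α, β : X → Y` induced by computable `f₁, f₂`,
the morphism `γ : Y → Z` induced by the identity, where `Z` is generated by
`Y ∪ {(f₁ x, f₂ x)}`, is a coequalizer of `α` and `β`. -/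
theorem stmt_11 (X Y : Setoid ℕ) (f₁ f₂ : ℕ → ℕ)
    (hf₁ : Computable f₁) (hf₂ : Computable f₂)
    (hp₁ : EqvPres X Y f₁) (hp₂ : EqvPres X Y f₂)
    (α β : Quotient X → Quotient Y)
    (hα : ∀ x, α (Quotient.mk X x) = Quotient.mk Y (f₁ x))
    (hβ : ∀ x, β (Quotient.mk X x) = Quotient.mk Y (f₂ x))
    (γ : Quotient Y → Quotient (genSetoid (coeqRel Y f₁ f₂)))
    (hγ : ∀ y, γ (Quotient.mk Y y) = Quotient.mk (genSetoid (coeqRel Y f₁ f₂)) y) :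
    IsMor Y (genSetoid (coeqRel Y f₁ f₂)) γ ∧ γ ∘ α = γ ∘ β ∧
    ∀ (U : Setoid ℕ) (γ' : Quotient Y → Quotient U),
      IsMor Y U γ' → γ' ∘ α = γ' ∘ β →
      ∃! δ : Quotient (genSetoid (coeqRel Y f₁ f₂)) → Quotient U,
        IsMor (genSetoid (coeqRel Y f₁ f₂)) U δ ∧ δ ∘ γ = γ' :=
  stmt_11_general X Y f₁ f₂ α β hα hβ γ hγ
end

section
/- Every ceer Z is a coequalizer, in the category Eq, of a pair of morphisms from Id to Id: if h is a computable function enumerating Z (i.e., u Z v iff ⟨u,v⟩ ∈ range h), then Z is the coequalizer of the morphisms induced by f₁(x) = (h(x))₀ and f₂(x) = (h(x))₁. -/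
/-- The identity (equality) equivalence relation on ℕ. -/
def idSetoid : Setoid ℕ := ⟨Eq, eq_equivalence⟩

/-!
A map `g` identifies everything that the equivalence relation generated by `Y` and the pairs
`(f₁ x, f₂ x)` identifies as soon as it preserves `Y` and identifies each pair. For an
enumeration `h` of `Z`, the pairs `(h n).unpair` are exactly the `Z`-related pairs, so `Z` is
that generated relation; the coequalizer property follows, the mediating morphism being
induced by the same computable function as `γ'`, and it is unique because `γ` is surjective.
-/

theorem EqvPres.of_le {R S : Setoid ℕ} (hRS : R ≤ S) : EqvPres R S id :=
  fun _ _ hxy => hRS hxy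

theorem idSetoid_le (S : Setoid ℕ) : idSetoid ≤ S := by
  rintro x _ rfl
  exact S.refl x

theorem EqvPres.rel_of_eqvGen_coeqRel {Y U : Setoid ℕ} {f₁ f₂ g : ℕ → ℕ} (hg : EqvPres Y U g)
    (hpair : ∀ x, U.r (g (f₁ x)) (g (f₂ x))) {u v : ℕ}
    (huv : Relation.EqvGen (coeqRel Y f₁ f₂) u v) : U.r (g u) (g v) := by
  induction huv with
  | rel a b hab =>
    rcases hab with hY | ⟨x, rfl, rfl⟩
    · exact hg a b hY
    · exact hpair x
  | refl a => exact U.refl _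
  | symm _ _ _ ih => exact U.symm ih
  | trans _ _ _ _ _ ih₁ ih₂ => exact U.trans ih₁ ih₂

theorem rel_iff_eqvGen_coeqRel_idSetoid {Z : Setoid ℕ} {f₁ f₂ : ℕ → ℕ}
    (hpair : ∀ x, Z.r (f₁ x) (f₂ x)) (hcover : ∀ u v, Z.r u v → ∃ x, u = f₁ x ∧ v = f₂ x)
    (u v : ℕ) : Z.r u v ↔ Relation.EqvGen (coeqRel idSetoid f₁ f₂) u v :=
  ⟨fun huv => .rel _ _ (Or.inr (hcover u v huv)),
    (EqvPres.of_le (idSetoid_le Z)).rel_of_eqvGen_coeqRel hpair⟩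

section Coequalizer

variable {X Y Z : Setoid ℕ} {f₁ f₂ : ℕ → ℕ}
  (hZ : ∀ u v, Z.r u v ↔ Relation.EqvGen (coeqRel Y f₁ f₂) u v)
  {α β : Quotient X → Quotient Y}
  (hα : ∀ x, α (Quotient.mk X x) = Quotient.mk Y (f₁ x))
  (hβ : ∀ x, β (Quotient.mk X x) = Quotient.mk Y (f₂ x))
  {γ : Quotient Y → Quotient Z} (hγ : ∀ x, γ (Quotient.mk Y x) = Quotient.mk Z x)
include hZ hγ

theorem isMor_of_eqvGen_coeqRel : IsMor Y Z γ :=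
  ⟨id, Computable.id, fun x y hxy => (hZ x y).2 (.rel _ _ (Or.inl hxy)), hγ⟩

include hα hβ

theorem comp_eq_comp_of_eqvGen_coeqRel : γ ∘ α = γ ∘ β := by
  funext q
  induction q using Quotient.ind with
  | _ x =>
    simp only [Function.comp_apply, hα, hβ, hγ]
    exact Quotient.sound ((hZ _ _).2 (.rel _ _ (Or.inr ⟨x, rfl, rfl⟩)))

theorem existsUnique_isMor_comp_of_eqvGen_coeqRel {U : Setoid ℕ}
    {γ' : Quotient Y → Quotient U} (hγ' : IsMor Y U γ') (hcoeq : γ' ∘ α = γ' ∘ β) :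
    ∃! δ : Quotient Z → Quotient U, IsMor Z U δ ∧ δ ∘ γ = γ' := by
  obtain ⟨g, hg_comp, hg_pres, hg_mk⟩ := hγ'
  have hg_pair : ∀ x, U.r (g (f₁ x)) (g (f₂ x)) := fun x => by
    have := congrFun hcoeq (Quotient.mk X x)
    simp only [Function.comp_apply, hα, hβ, hg_mk] at this
    exact Quotient.exact this
  have hg_Z : EqvPres Z U g := fun u v huv =>
    hg_pres.rel_of_eqvGen_coeqRel hg_pair ((hZ u v).1 huv)
  have hγ_surj : Function.Surjective γ := fun q => by
    induction q using Quotient.ind with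
    | _ x => exact ⟨_, hγ x⟩
  have hcomp : Quotient.map g hg_Z ∘ γ = γ' := by
    funext q
    induction q using Quotient.ind with
    | _ x => rw [Function.comp_apply, hγ, hg_mk]; rfl
  exact ⟨Quotient.map g hg_Z, ⟨⟨g, hg_comp, hg_Z, fun _ => rfl⟩, hcomp⟩,
    fun δ ⟨_, hδ⟩ => hγ_surj.injective_comp_right (hδ.trans hcomp.symm)⟩

end Coequalizer

theorem stmt_13_general (Z : Setoid ℕ) (h : ℕ → ℕ)
    (henum : ∀ u v, Z.r u v ↔ ∃ n, h n = Nat.pair u v)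
    (f₁ f₂ : ℕ → ℕ) (hf₁ : ∀ n, f₁ n = (h n).unpair.1) (hf₂ : ∀ n, f₂ n = (h n).unpair.2)
    (α β : Quotient idSetoid → Quotient idSetoid)
    (hα : ∀ x, α (Quotient.mk idSetoid x) = Quotient.mk idSetoid (f₁ x))
    (hβ : ∀ x, β (Quotient.mk idSetoid x) = Quotient.mk idSetoid (f₂ x))
    (γ : Quotient idSetoid → Quotient Z)
    (hγ : ∀ x, γ (Quotient.mk idSetoid x) = Quotient.mk Z x) :
    (∀ u v, Z.r u v ↔ Relation.EqvGen (coeqRel idSetoid f₁ f₂) u v) ∧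
    IsMor idSetoid Z γ ∧ γ ∘ α = γ ∘ β ∧
    ∀ (U : Setoid ℕ) (γ' : Quotient idSetoid → Quotient U),
      IsMor idSetoid U γ' → γ' ∘ α = γ' ∘ β →
      ∃! δ : Quotient Z → Quotient U, IsMor Z U δ ∧ δ ∘ γ = γ' := by
  have hpair : ∀ n, Z.r (f₁ n) (f₂ n) := fun n =>
    (henum _ _).2 ⟨n, by rw [hf₁, hf₂, Nat.pair_unpair]⟩
  have hcover : ∀ u v, Z.r u v → ∃ n, u = f₁ n ∧ v = f₂ n := fun u v huv => by
    obtain ⟨n, hn⟩ := (henum u v).1 huv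
    exact ⟨n, by simp [hf₁, hn], by simp [hf₂, hn]⟩
  have hZ := rel_iff_eqvGen_coeqRel_idSetoid hpair hcover
  exact ⟨hZ, isMor_of_eqvGen_coeqRel hZ hγ, comp_eq_comp_of_eqvGen_coeqRel hZ hα hβ hγ,
    fun _ _ => existsUnique_isMor_comp_of_eqvGen_coeqRel hZ hα hβ hγ⟩

/-- Every ceer `Z` is a coequalizer in `Eq` of a pair of morphisms `Id → Id`:
if `h` computably enumerates `Z` (`u Z v` iff `⟨u,v⟩ ∈ range h`), then `Z` is the
equivalence relation generated by the pairs `((h n).unpair.1, (h n).unpair.2)`, and the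
map induced by the identity is a coequalizer of the morphisms induced by the projections. -/
theorem stmt_13 (Z : Setoid ℕ) (h : ℕ → ℕ) (hh : Computable h)
    (henum : ∀ u v, Z.r u v ↔ ∃ n, h n = Nat.pair u v)
    (f₁ f₂ : ℕ → ℕ) (hf₁ : ∀ n, f₁ n = (h n).unpair.1) (hf₂ : ∀ n, f₂ n = (h n).unpair.2)
    (α β : Quotient idSetoid → Quotient idSetoid)
    (hα : ∀ x, α (Quotient.mk idSetoid x) = Quotient.mk idSetoid (f₁ x))
    (hβ : ∀ x, β (Quotient.mk idSetoid x) = Quotient.mk idSetoid (f₂ x))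
    (γ : Quotient idSetoid → Quotient Z)
    (hγ : ∀ x, γ (Quotient.mk idSetoid x) = Quotient.mk Z x) :
    (∀ u v, Z.r u v ↔ Relation.EqvGen (coeqRel idSetoid f₁ f₂) u v) ∧
    IsMor idSetoid Z γ ∧ γ ∘ α = γ ∘ β ∧
    ∀ (U : Setoid ℕ) (γ' : Quotient idSetoid → Quotient U),
      IsMor idSetoid U γ' → γ' ∘ α = γ' ∘ β →
      ∃! δ : Quotient Z → Quotient U, IsMor Z U δ ∧ δ ∘ γ = γ' :=
  stmt_13_general Z h henum f₁ f₂ hf₁ hf₂ α β hα hβ γ hγ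
end

section
/- The class of dark ceers together with finite ceers is closed under uniform join: if R and S are each either dark (infinitely many classes and Id is not computably reducible to them) or finite (finitely many classes), then R ⊕ S is dark or finite. -/
/-- The uniform join `R ⊕ S`: `2x ∼ 2y` iff `x R y`, `2x+1 ∼ 2y+1` iff `x S y`,
and evens are inequivalent to odds. -/
def joinSetoid (R S : Setoid ℕ) : Setoid ℕ where
  r n m := n % 2 = m % 2 ∧ (n % 2 = 0 → R.r (n / 2) (m / 2)) ∧ (n % 2 = 1 → S.r (n / 2) (m / 2))
  iseqv := by
    refine ⟨fun n => ⟨rfl, fun _ => R.iseqv.refl _, fun _ => S.iseqv.refl _⟩, ?_, ?_⟩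
    · rintro n m ⟨h1, h2, h3⟩
      exact ⟨h1.symm, fun h => R.iseqv.symm (h2 (h1.trans h)),
        fun h => S.iseqv.symm (h3 (h1.trans h))⟩
    · rintro n m k ⟨h1, h2, h3⟩ ⟨g1, g2, g3⟩
      exact ⟨h1.trans g1, fun h => R.iseqv.trans (h2 h) (g2 (h1.symm.trans h)),
        fun h => S.iseqv.trans (h3 h) (g3 (h1.symm.trans h))⟩

/-- Computable reducibility of equivalence relations. -/
def Reducible (R S : Setoid ℕ) : Prop :=
  ∃ f : ℕ → ℕ, Computable f ∧ ∀ x y, R.r x y ↔ S.r (f x) (f y)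

/-- A ceer is dark if it has infinitely many classes and `Id` is not reducible to it. -/
def Dark (R : Setoid ℕ) : Prop := ¬ Finite (Quotient R) ∧ ¬ Reducible idSetoid R

/-!
If `Id` reduced to `R ⊕ S` via `f`, then infinitely many `f x` would be even, say; enumerating
those `x` computably and halving their images would reduce `Id` to `R`. A finite ceer does not
admit a reduction of `Id` either, so `R ⊕ S` is dark unless both `R` and `S` are finite, and then
so is `R ⊕ S`.
-/

theorem Computable.nat_find {α : Type*} [Primcodable α] {p : α → ℕ → Bool}
    (hp : Computable₂ p) (H : ∀ a, ∃ n, p a n = true) :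
    Computable fun a => Nat.find (H a) := by
  refine (Partrec.rfind hp.partrec₂).of_eq_tot fun a => Nat.mem_rfind.2 ⟨?_, fun hm => ?_⟩
  · simpa using Nat.find_spec (H a)
  · simpa using Nat.find_min (H a) hm

theorem exists_computable_strictMono_of_infinite {p : ℕ → Bool} (hp : Computable p)
    (hinf : {x | p x = true}.Infinite) :
    ∃ g : ℕ → ℕ, Computable g ∧ StrictMono g ∧ ∀ n, p (g n) = true := by
  have hnext : ∀ a, ∃ b, (decide (a < b) && p b) = true := fun a => by
    obtain ⟨b, hb, hab⟩ := hinf.exists_gt a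
    exact ⟨b, by simp_all⟩
  obtain ⟨next, hnext_spec, hnext_computable⟩ :
      ∃ next : ℕ → ℕ, (∀ a, a < next a ∧ p (next a) = true) ∧ Computable next :=
    ⟨fun a => Nat.find (hnext a),
      fun a => by simpa only [Bool.and_eq_true, decide_eq_true_eq] using Nat.find_spec (hnext a),
      Computable.nat_find
        (Primrec.and.to_comp.comp Primrec.nat_lt.decide.to_comp (hp.comp .snd)).to₂ hnext⟩
  refine ⟨fun n => Nat.rec (next 0) (fun _ ih => next ih) n,
    Computable.nat_rec .id (.const _) (hnext_computable.comp (Computable.snd.comp .snd)).to₂,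
    strictMono_nat_of_lt_succ fun n => (hnext_spec _).1, fun n => ?_⟩
  cases n <;> exact (hnext_spec _).2

theorem reducible_idSetoid_iff {E : Setoid ℕ} :
    Reducible idSetoid E ↔ ∃ g : ℕ → ℕ, Computable g ∧ ∀ x y, x = y ↔ E.r (g x) (g y) :=
  Iff.rfl

theorem Reducible.not_finite_quotient {E : Setoid ℕ} (h : Reducible idSetoid E) :
    ¬ Finite (Quotient E) := by
  obtain ⟨g, -, hg⟩ := reducible_idSetoid_iff.1 h
  intro
  exact Finite.false (Finite.of_injective (fun n => Quotient.mk E (g n))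
    fun x y hxy => (hg x y).2 (Quotient.exact hxy))

theorem not_reducible_idSetoid_of_dark_or_finite {E : Setoid ℕ}
    (h : Dark E ∨ Finite (Quotient E)) : ¬ Reducible idSetoid E :=
  h.elim And.right fun hfin hred => hred.not_finite_quotient hfin

theorem reducible_idSetoid_of_infinite_restrict {T E : Setoid ℕ} {f h : ℕ → ℕ} {p : ℕ → Bool}
    (hf : Computable f) (hfT : ∀ x y, x = y ↔ T.r (f x) (f y)) (hp : Computable p)
    (hinf : {x | p (f x) = true}.Infinite) (hh : Computable h)
    (hTE : ∀ n m, p n = true → p m = true → (T.r n m ↔ E.r (h n) (h m))) :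
    Reducible idSetoid E := by
  obtain ⟨g, hg, hg_mono, hpg⟩ := exists_computable_strictMono_of_infinite (hp.comp hf) hinf
  refine reducible_idSetoid_iff.2 ⟨fun n => h (f (g n)), hh.comp (hf.comp hg), fun x y => ?_⟩
  rw [← hTE _ _ (hpg x) (hpg y), ← hfT, hg_mono.injective.eq_iff]

section Join

variable {R S : Setoid ℕ}

theorem joinSetoid_r_two_mul {x y : ℕ} : (joinSetoid R S).r (2 * x) (2 * y) ↔ R.r x y := by
  change _ ∧ _ ∧ _ ↔ _
  simp [Nat.mul_mod_right]

theorem joinSetoid_r_two_mul_add_one {x y : ℕ} :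
    (joinSetoid R S).r (2 * x + 1) (2 * y + 1) ↔ S.r x y := by
  change _ ∧ _ ∧ _ ↔ _
  simp [Nat.mul_add_div]

theorem joinSetoid_r_of_mod_two_eq_zero {n m : ℕ} (hn : n % 2 = 0) (hm : m % 2 = 0) :
    (joinSetoid R S).r n m ↔ R.r (n / 2) (m / 2) := by
  change _ ∧ _ ∧ _ ↔ _
  simp [hn, hm]

theorem joinSetoid_r_of_mod_two_eq_one {n m : ℕ} (hn : n % 2 = 1) (hm : m % 2 = 1) :
    (joinSetoid R S).r n m ↔ S.r (n / 2) (m / 2) := by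
  change _ ∧ _ ∧ _ ↔ _
  simp [hn, hm]

variable (R S)

def joinInl : Quotient R → Quotient (joinSetoid R S) :=
  Quotient.map' (2 * ·) fun _ _ => joinSetoid_r_two_mul.2

def joinInr : Quotient S → Quotient (joinSetoid R S) :=
  Quotient.map' (2 * · + 1) fun _ _ => joinSetoid_r_two_mul_add_one.2

theorem joinInl_injective : Function.Injective (joinInl R S) := by
  rintro ⟨x⟩ ⟨y⟩ h
  exact Quotient.sound (joinSetoid_r_two_mul.1 (Quotient.exact h))

theorem joinInr_injective : Function.Injective (joinInr R S) := by
  rintro ⟨x⟩ ⟨y⟩ h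
  exact Quotient.sound (joinSetoid_r_two_mul_add_one.1 (Quotient.exact h))

theorem sumElim_joinInl_joinInr_surjective :
    Function.Surjective (Sum.elim (joinInl R S) (joinInr R S)) := by
  rintro ⟨n⟩
  obtain ⟨k, rfl | rfl⟩ := Nat.even_or_odd' n
  exacts [⟨.inl ⟦k⟧, rfl⟩, ⟨.inr ⟦k⟧, rfl⟩]

theorem finite_quotient_joinSetoid_iff :
    Finite (Quotient (joinSetoid R S)) ↔ Finite (Quotient R) ∧ Finite (Quotient S) :=
  ⟨fun _ => ⟨.of_injective _ (joinInl_injective R S), .of_injective _ (joinInr_injective R S)⟩,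
    fun ⟨_, _⟩ => .of_surjective _ (sumElim_joinInl_joinInr_surjective R S)⟩

theorem not_reducible_idSetoid_joinSetoid (hR : ¬ Reducible idSetoid R)
    (hS : ¬ Reducible idSetoid S) : ¬ Reducible idSetoid (joinSetoid R S) := by
  rintro ⟨f, hf, hfT⟩
  have hmod : Computable fun n : ℕ => n % 2 := Primrec.nat_mod.to_comp.comp .id (.const 2)
  have hhalf : Computable fun n : ℕ => n / 2 := Primrec.nat_div.to_comp.comp .id (.const 2)
  have hsides : {x | f x % 2 = 0} ∪ {x | f x % 2 = 1} = Set.univ :=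
    Set.eq_univ_of_forall fun x => Nat.mod_two_eq_zero_or_one (f x)
  rcases Set.infinite_union.1 (hsides ▸ Set.infinite_univ) with hinf | hinf
  · refine hR (reducible_idSetoid_of_infinite_restrict (p := fun n => decide (n % 2 = 0)) hf hfT
      ?_ (by simpa using hinf) hhalf fun n m hn hm => ?_)
    · exact Primrec.eq.decide.to_comp.comp hmod (.const 0)
    · exact joinSetoid_r_of_mod_two_eq_zero (by simpa using hn) (by simpa using hm)
  · refine hS (reducible_idSetoid_of_infinite_restrict (p := fun n => decide (n % 2 = 1)) hf hfT
      ?_ (by simpa using hinf) hhalf fun n m hn hm => ?_)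
    · exact Primrec.eq.decide.to_comp.comp hmod (.const 1)
    · exact joinSetoid_r_of_mod_two_eq_one (by simpa using hn) (by simpa using hm)

end Join

theorem stmt_17_general (R S : Setoid ℕ)
    (h1 : Dark R ∨ Finite (Quotient R)) (h2 : Dark S ∨ Finite (Quotient S)) :
    Dark (joinSetoid R S) ∨ Finite (Quotient (joinSetoid R S)) := by
  by_cases hfin : Finite (Quotient R) ∧ Finite (Quotient S)
  · exact .inr ((finite_quotient_joinSetoid_iff R S).2 hfin)
  · exact .inl ⟨mt (finite_quotient_joinSetoid_iff R S).1 hfin,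
      not_reducible_idSetoid_joinSetoid R S (not_reducible_idSetoid_of_dark_or_finite h1)
        (not_reducible_idSetoid_of_dark_or_finite h2)⟩

/-- The class of dark-or-finite ceers is closed under uniform join. -/
theorem stmt_17 (R S : Setoid ℕ) (hR : Ceer R) (hS : Ceer S)
    (h1 : Dark R ∨ Finite (Quotient R)) (h2 : Dark S ∨ Finite (Quotient S)) :
    Dark (joinSetoid R S) ∨ Finite (Quotient (joinSetoid R S)) :=
  stmt_17_general R S h1 h2
end

section
/- Let X be an equivalence relation on ℕ and consider the morphisms α, β : X → X ⊕ Id₁ induced by ev(x) = 2x and the constant function odd(x) = 1. The coequalizer of α and β in Eq is (isomorphic to) Id₁, the one-class equivalence relation. -/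
/-- The one-class equivalence relation `Id₁` on ℕ. -/
def id1Setoid : Setoid ℕ :=
  ⟨fun _ _ => True, ⟨fun _ => trivial, fun _ => trivial, fun _ _ => trivial⟩⟩

section IdMor

variable {R S : Setoid ℕ}

def idMor (h : ∀ a b, R.r a b → S.r a b) : Quotient R → Quotient S :=
  Quotient.map' id h

theorem isMor_idMor (h : ∀ a b, R.r a b → S.r a b) : IsMor R S (idMor h) :=
  ⟨id, Computable.id, h, fun _ => rfl⟩

theorem idMor_comp_idMor (h : ∀ a b, R.r a b → S.r a b) (h' : ∀ a b, S.r a b → R.r a b) :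
    idMor h' ∘ idMor h = id := by
  funext q
  induction q using Quotient.ind
  rfl

end IdMor

theorem joinSetoid_id1_odd_rel_one (R : Setoid ℕ) (n : ℕ) (hn : n % 2 = 1) :
    (joinSetoid R id1Setoid).r n 1 :=
  ⟨by omega, by omega, fun _ => trivial⟩

theorem coeqRel_ev_odd_rel_one (X : Setoid ℕ) (n : ℕ) :
    (genSetoid (coeqRel (joinSetoid X id1Setoid) (fun x => 2 * x) (fun _ => 1))).r n 1 := by
  rcases Nat.even_or_odd' n with ⟨k, rfl | rfl⟩
  · exact .rel _ _ (.inr ⟨k, rfl, rfl⟩)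
  · exact .rel _ _ (.inl (joinSetoid_id1_odd_rel_one X _ (by omega)))

theorem coeqRel_ev_odd_total (X : Setoid ℕ) (a b : ℕ) :
    (genSetoid (coeqRel (joinSetoid X id1Setoid) (fun x => 2 * x) (fun _ => 1))).r a b :=
  .trans _ _ _ (coeqRel_ev_odd_rel_one X a) (.symm _ _ (coeqRel_ev_odd_rel_one X b))

/-- The coequalizer in `Eq` of the morphisms `X → X ⊕ Id₁` induced by `ev x = 2x` and the
constant function `1` is the one-class relation: the generated relation identifies every
`2x` with `1`, collapsing everything to one class, so it is isomorphic to `Id₁` in `Eq`. -/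
theorem stmt_19 (X : Setoid ℕ) :
    (∀ a b : ℕ,
      (genSetoid (coeqRel (joinSetoid X id1Setoid) (fun x => 2 * x) (fun _ => 1))).r a b) ∧
    ∃ (φ : Quotient (genSetoid (coeqRel (joinSetoid X id1Setoid) (fun x => 2 * x) (fun _ => 1))) →
        Quotient id1Setoid)
      (ψ : Quotient id1Setoid →
        Quotient (genSetoid (coeqRel (joinSetoid X id1Setoid) (fun x => 2 * x) (fun _ => 1)))),
      IsMor _ id1Setoid φ ∧ IsMor id1Setoid _ ψ ∧ ψ ∘ φ = id ∧ φ ∘ ψ = id := by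
  have hcoeq := coeqRel_ev_odd_total X
  refine ⟨hcoeq, idMor fun a b _ => trivial, idMor fun a b _ => hcoeq a b,
    isMor_idMor _, isMor_idMor _, idMor_comp_idMor _ _, idMor_comp_idMor _ _⟩
end
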